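/- Let κ be a kernel and let π(0) ∈ ℝ^k have strictly positive entries with ‖π(0)‖₁ = 1, and assume that at least one of the following holds: (a) κ has strictly positive entries and ρ(κ∘π(0)) ≤ 1; or (b) ρ(κ∘π(0)) < 1. Let π be the frozen percolation type flow with initial kernel κ and initial value π(0), with critical time t_c, and write κ_max = max_{i,j∈[k]} κ_{i,j}. Then for every i ∈ [k] and every T ≥ max(1, t_c): π_i(T) ≥ π_i(0)·e^{−(κ_max+1)}/T, and consequently π_i(T)/‖π(T)‖₁ ≥ π_i(0)·e^{−(κ_max+1)}. -/

import Mathlib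

open Matrix

noncomputable def perronRoot {k : ℕ} (A : Matrix (Fin k) (Fin k) ℝ) : ℝ :=
  sSup ((fun z : ℂ => ‖z‖) '' spectrum ℂ (A.map Complex.ofReal))

def circ {k : ℕ} (A : Matrix (Fin k) (Fin k) ℝ) (v : Fin k → ℝ) : Matrix (Fin k) (Fin k) ℝ :=
  Matrix.of fun i j => A i j * v j

noncomputable def l1norm {k : ℕ} (v : Fin k → ℝ) : ℝ := ∑ i, |v i|

noncomputable def kernelAt {k : ℕ} (κ : Matrix (Fin k) (Fin k) ℝ) (t : ℝ) :
    Matrix (Fin k) (Fin k) ℝ :=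
  κ + t • Matrix.of (fun _ _ => (1 : ℝ))

def IsKernel {k : ℕ} (κ : Matrix (Fin k) (Fin k) ℝ) : Prop :=
  κ.IsSymm ∧ ∀ i j, 0 ≤ κ i j

structure IsTypeFlow {k : ℕ} (κ : Matrix (Fin k) (Fin k) ℝ) (π : ℝ → Fin k → ℝ)
    (tc : ℝ) (φ : ℝ → ℝ) : Prop where
  nonneg : ∀ t ≥ (0 : ℝ), ∀ i, 0 ≤ π t i
  ne_zero : ∀ t ≥ (0 : ℝ), π t ≠ 0
  cont : ContinuousOn π (Set.Ici 0)
  tc_nonneg : 0 ≤ tc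
  phi_pos : ∀ t > tc, 0 < φ t
  phi_cont : ContinuousOn φ (Set.Ioi tc)
  init : ∀ t, 0 ≤ t → t ≤ tc → π t = π 0
  crit : ∀ t ≥ tc, perronRoot (circ (kernelAt κ t) (π t)) = 1
  flowDE : ∀ t > tc, ∃ μ : Fin k → ℝ,
      (∀ i, 0 < μ i) ∧ l1norm μ = 1 ∧
      Matrix.vecMul μ (circ (kernelAt κ t) (π t)) = μ ∧
      HasDerivAt π (-(φ t) • μ) t

/-
Above the critical time the flow moves along the left Perron eigenvector `μ`, normalised so
that `∑ μ = 1`. The eigen-equation reads `μᵢ = (t + (μκ)ᵢ) πᵢ`, so `t πᵢ ≤ μᵢ ≤ (κ_max + t) πᵢ`.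
Summing the first bound gives `t S ≤ 1` for the total mass `S = ∑ πᵢ`, which decreases at rate
`φ`; at `t_c` this forces `t_c ≤ 1`. The second bound makes
`log πⱼ - (κ_max + t) S` decrease at rate at most `S ≤ min 1 (1/t)`, and integrating that rate from
`t_c` to `T` costs at most `1 - t_c + log T`. The normalised bound then follows from
`S(T) ≤ 1/T`.
-/

open Set Finset

theorem l1norm_eq_sum_of_nonneg {k : ℕ} {v : Fin k → ℝ} (hv : ∀ i, 0 ≤ v i) :
    l1norm v = ∑ i, v i :=
  sum_congr rfl fun i _ => abs_of_nonneg (hv i)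

theorem vecMul_circ_kernelAt_apply {k : ℕ} (κ : Matrix (Fin k) (Fin k) ℝ) (t : ℝ)
    (μ v : Fin k → ℝ) (i : Fin k) :
    vecMul μ (circ (kernelAt κ t) v) i = (∑ l, μ l * κ l i + t * ∑ l, μ l) * v i := by
  simp only [vecMul, dotProduct, circ, kernelAt, of_apply, Matrix.add_apply, Matrix.smul_apply,
    smul_eq_mul, mul_one, mul_sum, sum_mul, ← sum_add_distrib]
  exact sum_congr rfl fun l _ => by ring

theorem sub_le_sub_of_deriv_le {f g : ℝ → ℝ} {a b : ℝ} (hab : a ≤ b)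
    (hf : ContinuousOn f (Icc a b)) (hg : ContinuousOn g (Icc a b))
    (hf' : DifferentiableOn ℝ f (Ioo a b)) (hg' : DifferentiableOn ℝ g (Ioo a b))
    (hle : ∀ x ∈ Ioo a b, deriv f x ≤ deriv g x) : f b - f a ≤ g b - g a := by
  have hmono : MonotoneOn (g - f) (Icc a b) := by
    refine monotoneOn_of_deriv_nonneg (convex_Icc a b) (hg.sub hf) ?_ fun x hx => ?_
    · rw [interior_Icc]
      exact hg'.sub hf'
    · rw [interior_Icc] at hx
      rw [deriv_sub (hg'.differentiableAt (isOpen_Ioo.mem_nhds hx))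
        (hf'.differentiableAt (isOpen_Ioo.mem_nhds hx))]
      exact sub_nonneg.2 (hle x hx)
  have := hmono (left_mem_Icc.2 hab) (right_mem_Icc.2 hab) hab
  simp only [Pi.sub_apply] at this
  linarith

noncomputable def componentPotential {k : ℕ} (π : ℝ → Fin k → ℝ) (M : ℝ) (j : Fin k)
    (t : ℝ) : ℝ :=
  Real.log (π t j) - (M + t) * ∑ i, π t i

namespace IsTypeFlow

variable {k : ℕ} {κ : Matrix (Fin k) (Fin k) ℝ} {π : ℝ → Fin k → ℝ} {tc : ℝ} {φ : ℝ → ℝ}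
  {t : ℝ}

theorem exists_eigvec (hπ : IsTypeFlow κ π tc φ) (ht : tc < t) :
    ∃ μ : Fin k → ℝ, (∀ i, 0 < μ i) ∧ ∑ i, μ i = 1 ∧
      (∀ i, μ i = (∑ l, μ l * κ l i + t) * π t i) ∧
      ∀ i, HasDerivAt (fun s => π s i) (-φ t * μ i) t := by
  obtain ⟨μ, hμpos, hμnorm, hμeig, hder⟩ := hπ.flowDE t ht
  have hsum : ∑ i, μ i = 1 := by
    rwa [l1norm_eq_sum_of_nonneg fun i => (hμpos i).le] at hμnorm
  refine ⟨μ, hμpos, hsum, fun i => ?_, fun i => by simpa using hasDerivAt_pi.1 hder i⟩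
  have := congrFun hμeig i
  rwa [vecMul_circ_kernelAt_apply, hsum, mul_one, eq_comm] at this

theorem pos_of_lt (hπ : IsTypeFlow κ π tc φ) (ht : tc < t) (i : Fin k) : 0 < π t i := by
  obtain ⟨μ, hμpos, -, hμeig, -⟩ := hπ.exists_eigvec ht
  refine (hπ.nonneg t (hπ.tc_nonneg.trans ht.le) i).lt_of_ne fun h => (hμpos i).ne' ?_
  rw [hμeig i, ← h, mul_zero]

theorem pos_of_le (hπ : IsTypeFlow κ π tc φ) (hpos : ∀ i, 0 < π 0 i) (ht : tc ≤ t)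
    (i : Fin k) : 0 < π t i := by
  rcases ht.eq_or_lt with rfl | ht
  · rw [hπ.init _ hπ.tc_nonneg le_rfl]
    exact hpos i
  · exact hπ.pos_of_lt ht i

theorem hasDerivAt_sum (hπ : IsTypeFlow κ π tc φ) (ht : tc < t) :
    HasDerivAt (fun s => ∑ i, π s i) (-φ t) t := by
  obtain ⟨μ, -, hsum, -, hder⟩ := hπ.exists_eigvec ht
  simpa [← mul_sum, hsum] using HasDerivAt.fun_sum (u := univ) fun i _ => hder i

theorem continuousOn_sum (hπ : IsTypeFlow κ π tc φ) :
    ContinuousOn (fun s => ∑ i, π s i) (Ici 0) :=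
  continuousOn_finsetSum _ fun i _ => (continuous_apply i).comp_continuousOn hπ.cont

theorem antitoneOn_sum (hπ : IsTypeFlow κ π tc φ) :
    AntitoneOn (fun s => ∑ i, π s i) (Ici tc) := by
  refine antitoneOn_of_deriv_nonpos (convex_Ici tc)
    (hπ.continuousOn_sum.mono fun x hx => hπ.tc_nonneg.trans hx) (fun x hx => ?_) fun x hx => ?_
  · rw [interior_Ici] at hx
    exact (hπ.hasDerivAt_sum hx).differentiableAt.differentiableWithinAt
  · rw [interior_Ici] at hx
    rw [(hπ.hasDerivAt_sum hx).deriv]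
    exact neg_nonpos.2 (hπ.phi_pos x hx).le

theorem mul_sum_le_one_of_lt (hπ : IsTypeFlow κ π tc φ) (hκ : ∀ i j, 0 ≤ κ i j)
    (ht : tc < t) : t * ∑ i, π t i ≤ 1 := by
  obtain ⟨μ, hμpos, hsum, hμeig, -⟩ := hπ.exists_eigvec ht
  rw [← hsum, mul_sum]
  refine sum_le_sum fun i _ => ?_
  have hμκ : 0 ≤ ∑ l, μ l * κ l i := sum_nonneg fun l _ => mul_nonneg (hμpos l).le (hκ l i)
  rw [hμeig i]
  nlinarith [hπ.pos_of_lt ht i]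

theorem mul_sum_le_one (hπ : IsTypeFlow κ π tc φ) (hκ : ∀ i j, 0 ≤ κ i j) (ht : tc ≤ t) :
    t * ∑ i, π t i ≤ 1 := by
  have hcont : ContinuousWithinAt (fun s => s * ∑ i, π s i) (Ioi t) t :=
    continuousWithinAt_id.mul ((hπ.continuousOn_sum t (hπ.tc_nonneg.trans ht)).mono
      fun s hs => (hπ.tc_nonneg.trans ht).trans (le_of_lt hs))
  exact le_of_tendsto hcont (eventually_nhdsWithin_of_forall fun s hs =>
    hπ.mul_sum_le_one_of_lt hκ (ht.trans_lt hs))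

theorem differentiableAt_componentPotential_and_neg_sum_le_deriv (hπ : IsTypeFlow κ π tc φ)
    {M : ℝ} (hM : ∀ i j, κ i j ≤ M) (ht : tc < t) (j : Fin k) :
    DifferentiableAt ℝ (componentPotential π M j) t ∧
      -∑ i, π t i ≤ deriv (componentPotential π M j) t := by
  obtain ⟨μ, hμpos, hsum, hμeig, hder⟩ := hπ.exists_eigvec ht
  have hπj := hπ.pos_of_lt ht j
  have hG : HasDerivAt (componentPotential π M j)
      (-φ t * μ j / π t j - (1 * ∑ i, π t i + (M + t) * -φ t)) t :=
    ((hder j).log hπj.ne').sub (((hasDerivAt_id t).const_add M).mul (hπ.hasDerivAt_sum ht))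
  have hμj : μ j / π t j ≤ M + t := by
    rw [div_le_iff₀ hπj, hμeig j]
    gcongr
    calc ∑ l, μ l * κ l j ≤ ∑ l, μ l * M :=
          sum_le_sum fun l _ => mul_le_mul_of_nonneg_left (hM l j) (hμpos l).le
      _ = M := by rw [← sum_mul, hsum, one_mul]
  refine ⟨hG.differentiableAt, ?_⟩
  rw [hG.deriv, neg_mul, neg_div, mul_div_assoc]
  linarith [mul_le_mul_of_nonneg_left hμj (hπ.phi_pos t ht).le]

theorem continuousOn_componentPotential (hπ : IsTypeFlow κ π tc φ) (hpos : ∀ i, 0 < π 0 i)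
    (M : ℝ) (j : Fin k) : ContinuousOn (componentPotential π M j) (Ici tc) := by
  have hsub : Ici tc ⊆ Ici 0 := fun x hx => hπ.tc_nonneg.trans hx
  refine ContinuousOn.sub ?_ ((continuousOn_const.add continuousOn_id).mul
    (hπ.continuousOn_sum.mono hsub))
  exact (((continuous_apply j).comp_continuousOn hπ.cont).mono hsub).log
    fun x hx => (hπ.pos_of_le hpos hx j).ne'

theorem tc_le_one (hπ : IsTypeFlow κ π tc φ) (hκ : ∀ i j, 0 ≤ κ i j)
    (hsum : ∑ i, π 0 i = 1) : tc ≤ 1 := by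
  simpa [hπ.init tc hπ.tc_nonneg le_rfl, hsum] using hπ.mul_sum_le_one hκ le_rfl

theorem sub_le_componentPotential_sub (hπ : IsTypeFlow κ π tc φ) {M : ℝ}
    (hM : ∀ i j, κ i j ≤ M) (hpos : ∀ i, 0 < π 0 i) (j : Fin k) {f : ℝ → ℝ} {a b : ℝ}
    (ha : tc ≤ a) (hab : a ≤ b) (hf : ContinuousOn f (Icc a b))
    (hf' : DifferentiableOn ℝ f (Ioo a b)) (hbound : ∀ x ∈ Ioo a b, deriv f x ≤ -∑ i, π x i) :
    f b - f a ≤ componentPotential π M j b - componentPotential π M j a := by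
  have hG := fun x (hx : x ∈ Ioo a b) =>
    hπ.differentiableAt_componentPotential_and_neg_sum_le_deriv hM (ha.trans_lt hx.1) j
  refine sub_le_sub_of_deriv_le hab hf ((hπ.continuousOn_componentPotential hpos M j).mono
    (Icc_subset_Ici_self.trans (Ici_subset_Ici.2 ha))) hf'
    (fun x hx => (hG x hx).1.differentiableWithinAt) fun x hx => (hbound x hx).trans (hG x hx).2

theorem log_sub_le_log (hπ : IsTypeFlow κ π tc φ) (hκ : ∀ i j, 0 ≤ κ i j) {M : ℝ}
    (hM : ∀ i j, κ i j ≤ M) (hpos : ∀ i, 0 < π 0 i) (hsum : ∑ i, π 0 i = 1) {T : ℝ}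
    (hT : 1 ≤ T) (j : Fin k) :
    Real.log (π 0 j) - (M + 1) - Real.log T ≤ Real.log (π T j) := by
  have hπtc : π tc = π 0 := hπ.init tc hπ.tc_nonneg le_rfl
  have htc := hπ.tc_le_one hκ hsum
  have hlog : ∀ x ∈ Icc 1 T, x ≠ 0 := fun x hx => (zero_lt_one.trans_le hx.1).ne'
  have hG1 := hπ.sub_le_componentPotential_sub hM hpos j (f := fun x => -x) le_rfl htc
    continuousOn_id.neg differentiableOn_id.neg fun x hx => by
      rw [deriv_neg'', neg_le_neg_iff]
      simpa [hπtc, hsum] using hπ.antitoneOn_sum self_mem_Ici hx.1.le hx.1.le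
  have hG2 := hπ.sub_le_componentPotential_sub hM hpos j (f := fun x => -Real.log x) htc hT
    (Real.continuousOn_log.mono hlog).neg
    (Real.differentiableOn_log.mono fun x hx => hlog x (Ioo_subset_Icc_self hx)).neg
    fun x hx => by
      rw [deriv.fun_neg, Real.deriv_log, neg_le_neg_iff, ← one_div,
        le_div_iff₀' (zero_lt_one.trans hx.1)]
      exact hπ.mul_sum_le_one hκ (htc.trans hx.1.le)
  have hGtc : componentPotential π M j tc = Real.log (π 0 j) - (M + tc) := by
    simp [componentPotential, hπtc, hsum]
  have hGT : componentPotential π M j T ≤ Real.log (π T j) := by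
    have hM0 : 0 ≤ M := (hκ j j).trans (hM j j)
    have hST : 0 ≤ ∑ i, π T i :=
      sum_nonneg fun i _ => (hπ.pos_of_le hpos (htc.trans hT) i).le
    rw [componentPotential]
    nlinarith
  rw [Real.log_one] at hG2
  linarith

theorem mul_exp_div_le (hπ : IsTypeFlow κ π tc φ) (hκ : ∀ i j, 0 ≤ κ i j) {M : ℝ}
    (hM : ∀ i j, κ i j ≤ M) (hpos : ∀ i, 0 < π 0 i) (hsum : ∑ i, π 0 i = 1) {T : ℝ}
    (hT : 1 ≤ T) (j : Fin k) : π 0 j * Real.exp (-(M + 1)) / T ≤ π T j := by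
  have hπT := hπ.pos_of_le hpos ((hπ.tc_le_one hκ hsum).trans hT) j
  calc π 0 j * Real.exp (-(M + 1)) / T
      = Real.exp (Real.log (π 0 j) - (M + 1) - Real.log T) := by
        rw [Real.exp_sub, Real.exp_sub, Real.exp_log (hpos j),
          Real.exp_log (zero_lt_one.trans_le hT), Real.exp_neg]
        ring
    _ ≤ Real.exp (Real.log (π T j)) :=
        Real.exp_le_exp.2 (hπ.log_sub_le_log hκ hM hpos hsum hT j)
    _ = π T j := Real.exp_log hπT

theorem mul_exp_le_div_sum (hπ : IsTypeFlow κ π tc φ) (hκ : ∀ i j, 0 ≤ κ i j) {M : ℝ}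
    (hM : ∀ i j, κ i j ≤ M) (hpos : ∀ i, 0 < π 0 i) (hsum : ∑ i, π 0 i = 1) {T : ℝ}
    (hT : 1 ≤ T) (j : Fin k) : π 0 j * Real.exp (-(M + 1)) ≤ π T j / ∑ i, π T i := by
  have hTtc := (hπ.tc_le_one hκ hsum).trans hT
  have hS : 0 < ∑ i, π T i := sum_pos (fun i _ => hπ.pos_of_le hpos hTtc i)
    ⟨j, mem_univ j⟩
  have hST : ∑ i, π T i ≤ T⁻¹ := by
    rw [← one_div, le_div_iff₀' (zero_lt_one.trans_le hT)]
    exact hπ.mul_sum_le_one hκ hTtc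
  rw [le_div_iff₀ hS]
  calc π 0 j * Real.exp (-(M + 1)) * ∑ i, π T i
      ≤ π 0 j * Real.exp (-(M + 1)) * T⁻¹ := by
        gcongr
        exact mul_nonneg (hpos j).le (Real.exp_pos _).le
    _ ≤ π T j := hπ.mul_exp_div_le hκ hM hpos hsum hT j

end IsTypeFlow

theorem type_flow_component_lower_bound_general
    {k : ℕ} (κ : Matrix (Fin k) (Fin k) ℝ) (hκ : IsKernel κ)
    (π0 : Fin k → ℝ) (hπ0pos : ∀ i, 0 < π0 i) (hπ0sum : l1norm π0 = 1)
    (π : ℝ → Fin k → ℝ) (tc : ℝ) (φ : ℝ → ℝ)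
    (hπ : IsTypeFlow κ π tc φ) (hπinit : π 0 = π0) :
    ∀ i, ∀ T : ℝ, max 1 tc ≤ T →
      π0 i * Real.exp (-((⨆ i, ⨆ j, κ i j) + 1)) / T ≤ π T i ∧
      π0 i * Real.exp (-((⨆ i, ⨆ j, κ i j) + 1)) ≤ π T i / l1norm (π T) := by
  subst hπinit
  intro j T hT
  have hM : ∀ i j, κ i j ≤ ⨆ i, ⨆ j, κ i j := fun i j =>
    (le_ciSup (Finite.bddAbove_range _) j).trans
      (le_ciSup (Finite.bddAbove_range fun i => ⨆ j, κ i j) i)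
  have hsum : ∑ i, π 0 i = 1 := by
    rwa [l1norm_eq_sum_of_nonneg fun i => (hπ0pos i).le] at hπ0sum
  have hT1 : 1 ≤ T := le_of_max_le_left hT
  rw [l1norm_eq_sum_of_nonneg (hπ.nonneg T (zero_le_one.trans hT1))]
  exact ⟨hπ.mul_exp_div_le hκ.2 hM hπ0pos hsum hT1 j,
    hπ.mul_exp_le_div_sum hκ.2 hM hπ0pos hsum hT1 j⟩

/-- Lower bound (6.4) (lowbdpiT): an explicit lower bound on each component of the
frozen percolation type flow, and on its normalised version. -/
theorem type_flow_component_lower_bound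
    {k : ℕ} (hk : 0 < k) (κ : Matrix (Fin k) (Fin k) ℝ) (hκ : IsKernel κ)
    (π0 : Fin k → ℝ) (hπ0pos : ∀ i, 0 < π0 i) (hπ0sum : l1norm π0 = 1)
    (hcase : ((∀ i j, 0 < κ i j) ∧ perronRoot (circ κ π0) ≤ 1) ∨
      perronRoot (circ κ π0) < 1)
    (π : ℝ → Fin k → ℝ) (tc : ℝ) (φ : ℝ → ℝ)
    (hπ : IsTypeFlow κ π tc φ) (hπinit : π 0 = π0) :
    ∀ i, ∀ T : ℝ, max 1 tc ≤ T →
      π0 i * Real.exp (-((⨆ i, ⨆ j, κ i j) + 1)) / T ≤ π T i ∧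
      π0 i * Real.exp (-((⨆ i, ⨆ j, κ i j) + 1)) ≤ π T i / l1norm (π T) :=
  type_flow_component_lower_bound_general κ hκ π0 hπ0pos hπ0sum π tc φ hπ hπinit
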